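/- arXiv:1808.03718 — 5 statements merged into one kernel-verified Lean document; each statement's English description precedes it below -/
import Mathlib

section
/- Under the MIS/RMIS tableau setup, assume the inner weights satisfy the quadrature conditions (b^I)^⊺𝟙 = 1 and (b^I)^⊺c^I = 1/2. Then A^{s,f} c^f = (1/2)(c^O × c^O), i.e. for every i = 1,…,s^O the i-th entry of A^{s,f} c^f equals (1/2)(c^O_i)^2. -/
/-! Under the two order conditions the inner method integrates `t ↦ t` exactly, so the `j`-th
block of `A^{s,f} c^f` is `∫_{c_j}^{c_{j+1}} t dt = (c_{j+1}² - c_j²)/2`; summing over `j < i`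
telescopes to `c_i²/2` because `c_1 = 0`. -/

open Matrix BigOperators Finset

/-- The increments `d_j = c^O_{j+1} - c^O_j` (with `d_{s^O} = 1 - c^O_{s^O}`). -/
noncomputable def misD (sO : ℕ) (cO : Fin sO → ℝ) (j : Fin sO) : ℝ :=
  if h : j.val + 1 < sO then cO ⟨j.val + 1, h⟩ - cO j else 1 - cO j

/-- The fast-fast GARK coefficient matrix `A^{f,f}` of the MIS/RMIS tableau. -/
noncomputable def misAff (sI sO : ℕ) (AI : Matrix (Fin sI) (Fin sI) ℝ)
    (bI : Fin sI → ℝ) (cO : Fin sO → ℝ) :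
    Matrix (Fin sO × Fin sI) (Fin sO × Fin sI) ℝ :=
  fun ip jq =>
    if jq.1 < ip.1 then misD sO cO jq.1 * bI jq.2
    else if jq.1 = ip.1 then misD sO cO ip.1 * AI ip.2 jq.2
    else 0

/-- The slow-fast GARK coefficient matrix `A^{s,f}` of the MIS/RMIS tableau. -/
noncomputable def misAsf (sI sO : ℕ) (bI : Fin sI → ℝ) (cO : Fin sO → ℝ) :
    Matrix (Fin sO) (Fin sO × Fin sI) ℝ :=
  fun i jq => if jq.1 < i then misD sO cO jq.1 * bI jq.2 else 0

/-- The fast-slow GARK coefficient matrix `A^{f,s}` of the MIS/RMIS tableau. -/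
noncomputable def misAfs (sI sO : ℕ) (cI : Fin sI → ℝ)
    (AO : Matrix (Fin sO) (Fin sO) ℝ) (bO : Fin sO → ℝ) :
    Matrix (Fin sO × Fin sI) (Fin sO) ℝ :=
  fun ip j =>
    if ip.1.val = 0 then
      (if h : 1 < sO then cI ip.2 * AO ⟨1, h⟩ j else 0)
    else if h : ip.1.val + 1 < sO then
      AO ip.1 j + cI ip.2 * (AO ⟨ip.1.val + 1, h⟩ j - AO ip.1 j)
    else
      AO ip.1 j + cI ip.2 * (bO j - AO ip.1 j)

/-- The fast abscissae `c^f` of the MIS/RMIS tableau. -/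
noncomputable def misCf (sI sO : ℕ) (cI : Fin sI → ℝ) (cO : Fin sO → ℝ) :
    Fin sO × Fin sI → ℝ :=
  fun ip => cO ip.1 + misD sO cO ip.1 * cI ip.2

/-- The RMIS fast weights `b^f` (i-th block is `b^O_i e_1`). -/
noncomputable def misBf (sI sO : ℕ) (bO : Fin sO → ℝ) : Fin sO × Fin sI → ℝ :=
  fun ip => if ip.2.val = 0 then bO ip.1 else 0

/-- The vector `v^O` appearing in the fourth-order RMIS condition. -/
noncomputable def misV (sO : ℕ) (bO cO : Fin sO → ℝ) (i : Fin sO) : ℝ :=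
  if i.val = 0 then 0
  else if h : i.val + 1 < sO then
    bO i * (cO i - cO ⟨i.val - 1, by have := i.isLt; omega⟩) +
      (cO ⟨i.val + 1, h⟩ - cO ⟨i.val - 1, by have := i.isLt; omega⟩) *
        ∑ j ∈ Finset.univ.filter (fun j => i < j), bO j
  else bO i * (cO i - cO ⟨i.val - 1, by have := i.isLt; omega⟩)

-- The outer abscissae continued by `1` at index `s^O` (the end of the macro step), so that
-- `d_j = c_{j+1} - c_j` holds for every stage `j`.
noncomputable def misAbscissa (sO : ℕ) (cO : Fin sO → ℝ) (n : ℕ) : ℝ :=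
  if h : n < sO then cO ⟨n, h⟩ else 1

lemma misAbscissa_val {sO : ℕ} (cO : Fin sO → ℝ) (j : Fin sO) :
    misAbscissa sO cO j = cO j := by
  simp [misAbscissa]

lemma misD_eq_sub {sO : ℕ} (cO : Fin sO → ℝ) (j : Fin sO) :
    misD sO cO j = misAbscissa sO cO (j + 1) - misAbscissa sO cO j := by
  unfold misD misAbscissa
  split_ifs <;> simp_all

lemma sum_range_sub_mul_add_half_sub (x : ℕ → ℝ) (m : ℕ) :
    ∑ n ∈ range m, (x (n + 1) - x n) * (x n + (x (n + 1) - x n) / 2) =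
      (x m ^ 2 - x 0 ^ 2) / 2 := by
  rw [sub_div]
  refine (sum_congr rfl fun n _ => ?_).trans (sum_range_sub (fun n => x n ^ 2 / 2) m)
  ring

lemma sum_mul_mul_add_mul_eq {ι : Type*} [Fintype ι] {b c : ι → ℝ}
    (hb : ∑ q, b q = 1) (hbc : ∑ q, b q * c q = 1 / 2) (d x : ℝ) :
    ∑ q, d * b q * (x + d * c q) = d * (x + d / 2) := by
  calc ∑ q, d * b q * (x + d * c q) = d * x * ∑ q, b q + d ^ 2 * ∑ q, b q * c q := by
        rw [mul_sum, mul_sum, ← sum_add_distrib]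
        exact sum_congr rfl fun q _ => by ring
    _ = d * (x + d / 2) := by rw [hb, hbc]; ring

lemma sum_fin_Iio_eq_sum_range {M : Type*} [AddCommMonoid M] {n : ℕ} (i : Fin n) (f : ℕ → M) :
    ∑ j ∈ Iio i, f j = ∑ k ∈ range i, f k := by
  rw [← Nat.Iio_eq_range, ← Fin.map_valEmbedding_Iio, sum_map]
  rfl

lemma misAsf_mulVec_misCf_apply (sI sO : ℕ) (bI cI : Fin sI → ℝ) (cO : Fin sO → ℝ)
    (i : Fin sO) :
    (misAsf sI sO bI cO *ᵥ misCf sI sO cI cO) i =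
      ∑ j ∈ Iio i, ∑ q, misD sO cO j * bI q * (cO j + misD sO cO j * cI q) := by
  rw [mulVec, dotProduct, Fintype.sum_prod_type]
  simp only [misAsf, misCf, ite_mul, zero_mul, sum_ite_irrel, sum_const_zero]
  rw [← sum_filter, filter_gt_eq_Iio]

/-- If the inner weights satisfy `(b^I)ᵀ𝟙 = 1` and `(b^I)ᵀc^I = 1/2`,
then `A^{s,f} c^f = (1/2) (c^O × c^O)` entrywise. -/
theorem asf_cf_eq_half_cO_sq (sI sO : ℕ) (hsO : 2 ≤ sO)
    (bI cI : Fin sI → ℝ)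
    (cO : Fin sO → ℝ)
    (hcO1 : cO ⟨0, by omega⟩ = 0)
    (hbI1 : ∑ q, bI q = 1)
    (hbI2 : ∑ q, bI q * cI q = 1 / 2) :
    ∀ i : Fin sO, (misAsf sI sO bI cO *ᵥ misCf sI sO cI cO) i = (1 / 2) * (cO i) ^ 2 := by
  intro i
  have hc0 : misAbscissa sO cO 0 = 0 := by simpa [misAbscissa, show 0 < sO by omega] using hcO1
  calc (misAsf sI sO bI cO *ᵥ misCf sI sO cI cO) i
      = ∑ j ∈ Iio i, misD sO cO j * (cO j + misD sO cO j / 2) := by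
        simp only [misAsf_mulVec_misCf_apply, sum_mul_mul_add_mul_eq hbI1 hbI2]
    _ = ∑ n ∈ range i, (misAbscissa sO cO (n + 1) - misAbscissa sO cO n) *
          (misAbscissa sO cO n + (misAbscissa sO cO (n + 1) - misAbscissa sO cO n) / 2) := by
        rw [← sum_fin_Iio_eq_sum_range]
        simp only [misD_eq_sub, misAbscissa_val]
    _ = (1 / 2) * (cO i) ^ 2 := by
        rw [sum_range_sub_mul_add_half_sub, misAbscissa_val, hc0]
        ring
end

section
/- Under the MIS/RMIS tableau setup, assume the inner weights satisfy the quadrature conditions (b^I)^⊺𝟙 = 1, (b^I)^⊺c^I = 1/2 and (b^I)^⊺(c^I × c^I) = 1/3. Then (b^O)^⊺ A^{s,f} (c^f × c^f) = (1/3)(b^O)^⊺((c^O)^3), where (c^O)^3 is the componentwise cube. -/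
open Matrix BigOperators Finset

/-- If `(b^I)ᵀ𝟙 = 1`, `(b^I)ᵀc^I = 1/2` and `(b^I)ᵀ(c^I × c^I) = 1/3`,
then `(b^O)ᵀ A^{s,f} (c^f × c^f) = (1/3)(b^O)ᵀ((c^O)^3)`. -/
theorem bO_asf_cf_sq (sI sO : ℕ) (hsI : 1 ≤ sI) (hsO : 2 ≤ sO)
    (AI : Matrix (Fin sI) (Fin sI) ℝ) (bI cI : Fin sI → ℝ)
    (AO : Matrix (Fin sO) (Fin sO) ℝ) (bO cO : Fin sO → ℝ)
    (hcO1 : cO ⟨0, by omega⟩ = 0)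
    (hbI1 : ∑ q, bI q = 1)
    (hbI2 : ∑ q, bI q * cI q = 1 / 2)
    (hbI3 : ∑ q, bI q * (cI q * cI q) = 1 / 3) :
    bO ⬝ᵥ (misAsf sI sO bI cO *ᵥ (fun ip => misCf sI sO cI cO ip * misCf sI sO cI cO ip))
      = (1 / 3) * ∑ i, bO i * (cO i) ^ 3 := by
  have key : ∀ i : Fin sO,
      (misAsf sI sO bI cO *ᵥ (fun ip => misCf sI sO cI cO ip * misCf sI sO cI cO ip)) i
        = (cO i) ^ 3 / 3 := by
    intro i
    -- helper function on ℕ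
    set G : ℕ → ℝ := fun k => if h : k < sO then (cO ⟨k, h⟩) ^ 3 / 3 else 0 with hG
    have inner : ∀ j : Fin sO, (j : ℕ) < (i : ℕ) →
        (∑ q, (misD sO cO j * bI q) *
          (misCf sI sO cI cO (j, q) * misCf sI sO cI cO (j, q)))
          = G (j.val + 1) - G j.val := by
      intro j hj
      have hj1 : j.val + 1 < sO := by have := i.isLt; omega
      have hd : misD sO cO j = cO ⟨j.val + 1, hj1⟩ - cO j := by
        simp [misD, hj1]
      have expand : ∀ q, (misD sO cO j * bI q) *
          (misCf sI sO cI cO (j, q) * misCf sI sO cI cO (j, q))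
          = (misD sO cO j * (cO j * cO j)) * bI q
            + (2 * misD sO cO j * misD sO cO j * cO j) * (bI q * cI q)
            + (misD sO cO j * misD sO cO j * misD sO cO j) * (bI q * (cI q * cI q)) := by
        intro q; simp only [misCf]; ring
      rw [Finset.sum_congr rfl (fun q _ => expand q)]
      rw [Finset.sum_add_distrib, Finset.sum_add_distrib, ← Finset.mul_sum,
        ← Finset.mul_sum, ← Finset.mul_sum, hbI1, hbI2, hbI3, hd]
      have hjs : j.val < sO := j.isLt
      simp only [hG]
      rw [dif_pos hj1, dif_pos hjs]
      have : (⟨j.val, hjs⟩ : Fin sO) = j := by ext; rfl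
      rw [this]; ring
    have hmul : (misAsf sI sO bI cO *ᵥ
        (fun ip => misCf sI sO cI cO ip * misCf sI sO cI cO ip)) i
        = ∑ j : Fin sO, if (j : ℕ) < (i : ℕ) then G (j.val + 1) - G j.val else 0 := by
      simp only [Matrix.mulVec, dotProduct, misAsf]
      rw [Fintype.sum_prod_type]
      refine Finset.sum_congr rfl (fun j _ => ?_)
      by_cases h : j < i
      · rw [if_pos (by exact_mod_cast h), ← inner j (by exact_mod_cast h)]
        refine Finset.sum_congr rfl (fun q _ => ?_)
        rw [if_pos h]
      · rw [if_neg (by exact_mod_cast h)]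
        simp [if_neg h]
    rw [hmul]
    have hrange : (∑ j : Fin sO, if (j : ℕ) < (i : ℕ) then G (j.val + 1) - G j.val else 0)
        = ∑ k ∈ Finset.range sO, (if k < (i : ℕ) then G (k + 1) - G k else 0) := by
      rw [Finset.sum_range fun k => if k < (i : ℕ) then G (k + 1) - G k else 0]
    rw [hrange]
    rw [← Finset.sum_subset (Finset.range_subset_range.mpr (le_of_lt i.isLt))
      (fun x _ hx => by rw [if_neg (by simpa using hx)])]
    rw [Finset.sum_congr rfl (fun k hk => if_pos (Finset.mem_range.mp hk)),
      Finset.sum_range_sub G]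
    have h0 : G 0 = 0 := by
      simp only [hG, dif_pos (show 0 < sO by omega)]
      rw [show (⟨0, by omega⟩ : Fin sO) = ⟨0, by omega⟩ from rfl]
      simp [hcO1]
    have hi : G i.val = (cO i) ^ 3 / 3 := by
      simp only [hG, dif_pos i.isLt]
    rw [h0, hi, sub_zero]
  simp only [dotProduct]
  rw [Finset.sum_congr rfl (fun i _ => by rw [key i]), Finset.mul_sum]
  exact Finset.sum_congr rfl (fun i _ => by ring)
end

section
/- Under the MIS/RMIS tableau setup, assume the inner weights satisfy (b^I)^⊺𝟙 = 1 and (b^I)^⊺c^I = 1/2. Then (b^O)^⊺ A^{s,f} A^{f,s} c^O = (1/2)(v^O)^⊺ A^O c^O, where v^O ∈ ℝ^{s^O} is defined by v^O_1 = 0, v^O_i = b^O_i (c^O_i − c^O_{i−1}) + (c^O_{i+1} − c^O_{i−1}) Σ_{j=i+1}^{s^O} b^O_j for 1 < i < s^O, and v^O_{s^O} = b^O_{s^O}(c^O_{s^O} − c^O_{s^O−1}). -/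
open Matrix BigOperators Finset

/-! The inner weights integrate affine functions of `c^I` exactly, so averaging the `j`-th block
of `A^{f,s} c^O` against `b^I` gives the midpoint `(w_j + w_{j+1}) / 2` of consecutive slow stage
values `w = A^O c^O` (with `0` in place of `w_1` for the first block). The left-hand side becomes
`∑_j B_j d_j (w_j + w_{j+1}) / 2` with tail weights `B_j = ∑_{i > j} b^O_i`; the last block, the
only one involving `b^O`, carries `B = 0`. Summation by parts, using `B_{j-1} = b^O_j + B_j`,
collects the coefficient of each `w_i` into `v^O_i`. -/

/-- Moving indices to `ℕ` makes the shifts `j ± 1` of the tableau total. -/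
def extendByZero {M : Type*} [Zero M] {s : ℕ} (f : Fin s → M) (n : ℕ) : M :=
  if h : n < s then f ⟨n, h⟩ else 0

@[simp]
lemma extendByZero_val {M : Type*} [Zero M] {s : ℕ} (f : Fin s → M) (i : Fin s) :
    extendByZero f i = f i := by
  simp [extendByZero]

lemma extendByZero_of_lt {M : Type*} [Zero M] {s n : ℕ} (f : Fin s → M) (h : n < s) :
    extendByZero f n = f ⟨n, h⟩ :=
  dif_pos h

lemma sum_Ioi_eq_sum_Ioo_extendByZero {M : Type*} [AddCommMonoid M] {s : ℕ} (f : Fin s → M)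
    (j : Fin s) : ∑ i ∈ Ioi j, f i = ∑ n ∈ Ioo (j : ℕ) s, extendByZero f n := by
  rw [← Fin.map_valEmbedding_Ioi, sum_map]
  simp

lemma sum_Ioo_eq_zero_of_le {M : Type*} [AddCommMonoid M] {n s : ℕ} (b : ℕ → M)
    (h : s ≤ n + 1) : ∑ i ∈ Ioo n s, b i = 0 :=
  sum_eq_zero fun i hi => by rw [mem_Ioo] at hi; omega

lemma dotProduct_misAsf_mulVec (sI sO : ℕ) (bI : Fin sI → ℝ) (bO cO : Fin sO → ℝ)
    (y : Fin sO × Fin sI → ℝ) :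
    bO ⬝ᵥ (misAsf sI sO bI cO *ᵥ y)
      = ∑ j, (∑ i ∈ Ioi j, bO i) * misD sO cO j * ∑ q, bI q * y (j, q) := by
  simp only [dotProduct, mulVec, misAsf, Fintype.sum_prod_type, mul_sum, ← filter_lt_eq_Ioi,
    sum_filter, sum_mul]
  rw [sum_comm]
  refine sum_congr rfl fun j _ => ?_
  rw [sum_comm]
  refine sum_congr rfl fun q _ => sum_congr rfl fun i _ => ?_
  split_ifs <;> ring

lemma sum_mul_add_mul_sub_eq_add_div_two {ι : Type*} [Fintype ι] {b c : ι → ℝ}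
    (hb : ∑ q, b q = 1) (hbc : ∑ q, b q * c q = 1 / 2) (l r : ℝ) :
    ∑ q, b q * (l + c q * (r - l)) = (l + r) / 2 := by
  simp only [mul_add, ← mul_assoc, sum_add_distrib, ← sum_mul, hb, hbc]
  ring

lemma misAfs_mulVec_apply_of_lt {sI sO : ℕ} {cI : Fin sI → ℝ}
    {AO : Matrix (Fin sO) (Fin sO) ℝ} {bO x : Fin sO → ℝ} {j : Fin sO} {q : Fin sI}
    (hj : (j : ℕ) + 1 < sO) :
    (misAfs sI sO cI AO bO *ᵥ x) (j, q)
      = (if (j : ℕ) = 0 then 0 else (AO *ᵥ x) j)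
        + cI q * (extendByZero (AO *ᵥ x) (j + 1)
          - if (j : ℕ) = 0 then 0 else (AO *ᵥ x) j) := by
  simp only [mulVec, dotProduct, misAfs, extendByZero, dif_pos hj]
  split_ifs with h0 h1
  · simp [h0, mul_sum, mul_assoc]
  · omega
  · simp [add_mul, mul_sub, sub_mul, sum_add_distrib, sum_sub_distrib, mul_sum, mul_assoc]

lemma sum_tail_mul_sub_mul_eq (s : ℕ) (b c w : ℕ → ℝ) :
    ∑ n ∈ range s, (∑ i ∈ Ioo n s, b i) * (c (n + 1) - c n)
        * ((if n = 0 then 0 else w n) + w (n + 1))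
      = ∑ n ∈ range s, (if n = 0 then 0 else
          b n * (c n - c (n - 1)) + (∑ i ∈ Ioo n s, b i) * (c (n + 1) - c (n - 1))) * w n := by
  cases s with
  | zero => simp
  | succ k =>
    have tail_succ (n : ℕ) (hn : n < k) :
        ∑ i ∈ Ioo n (k + 1), b i = b (n + 1) + ∑ i ∈ Ioo (n + 1) (k + 1), b i := by
      rw [← sum_insert (by simp)]
      congr 1
      ext i
      simp only [mem_Ioo, mem_insert]
      omega
    simp only [mul_add, sum_add_distrib]
    rw [sum_range_succ', sum_range_succ, sum_range_succ']
    have tail_last : ∑ i ∈ Ioo k (k + 1), b i = 0 := sum_Ioo_eq_zero_of_le b le_rfl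
    simp only [Nat.add_one_ne_zero, if_false, if_true, Nat.add_sub_cancel, tail_last, mul_zero,
      zero_mul, add_zero, ← sum_add_distrib]
    refine sum_congr rfl fun n hn => ?_
    rw [tail_succ n (mem_range.mp hn)]
    ring

lemma misV_eq (sO : ℕ) (bO cO : Fin sO → ℝ) (i : Fin sO) :
    misV sO bO cO i = if (i : ℕ) = 0 then 0 else
      extendByZero bO i * (extendByZero cO i - extendByZero cO (i - 1))
        + (∑ n ∈ Ioo (i : ℕ) sO, extendByZero bO n)
          * (extendByZero cO (i + 1) - extendByZero cO (i - 1)) := by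
  have hi := i.isLt
  rw [misV, filter_lt_eq_Ioi, sum_Ioi_eq_sum_Ioo_extendByZero]
  split_ifs with h0 hlt
  · rfl
  · rw [extendByZero_val, extendByZero_val, extendByZero_of_lt _ hlt,
      extendByZero_of_lt _ (show (i : ℕ) - 1 < sO by omega)]
    ring
  · rw [sum_Ioo_eq_zero_of_le _ (by omega), zero_mul, add_zero, extendByZero_val, extendByZero_val,
      extendByZero_of_lt _ (show (i : ℕ) - 1 < sO by omega)]

lemma misV_dotProduct (sO : ℕ) (bO cO y : Fin sO → ℝ) :
    misV sO bO cO ⬝ᵥ y = ∑ n ∈ range sO, (if n = 0 then 0 else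
      extendByZero bO n * (extendByZero cO n - extendByZero cO (n - 1))
        + (∑ i ∈ Ioo n sO, extendByZero bO i)
          * (extendByZero cO (n + 1) - extendByZero cO (n - 1))) * extendByZero y n := by
  rw [dotProduct, ← Fin.sum_univ_eq_sum_range]
  simp only [misV_eq, extendByZero_val]

lemma dotProduct_misAsf_mulVec_misAfs_mulVec {sI sO : ℕ} {bI cI : Fin sI → ℝ}
    {AO : Matrix (Fin sO) (Fin sO) ℝ} {bO cO x : Fin sO → ℝ}
    (hbI1 : ∑ q, bI q = 1) (hbI2 : ∑ q, bI q * cI q = 1 / 2) :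
    bO ⬝ᵥ (misAsf sI sO bI cO *ᵥ (misAfs sI sO cI AO bO *ᵥ x))
      = 1 / 2 * ∑ n ∈ range sO, (∑ i ∈ Ioo n sO, extendByZero bO i)
          * (extendByZero cO (n + 1) - extendByZero cO n)
          * ((if n = 0 then 0 else extendByZero (AO *ᵥ x) n)
            + extendByZero (AO *ᵥ x) (n + 1)) := by
  rw [dotProduct_misAsf_mulVec, mul_sum, ← Fin.sum_univ_eq_sum_range]
  refine sum_congr rfl fun j _ => ?_
  rw [sum_Ioi_eq_sum_Ioo_extendByZero]
  by_cases hj : (j : ℕ) + 1 < sO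
  · simp only [misAfs_mulVec_apply_of_lt hj, sum_mul_add_mul_sub_eq_add_div_two hbI1 hbI2, misD,
      dif_pos hj, extendByZero_val, extendByZero_of_lt _ hj]
    ring
  · simp [sum_Ioo_eq_zero_of_le _ (not_lt.mp hj)]

/-- If `(b^I)ᵀ𝟙 = 1` and `(b^I)ᵀc^I = 1/2`, then
`(b^O)ᵀ A^{s,f} A^{f,s} c^O = (1/2)(v^O)ᵀ A^O c^O`. -/
theorem bO_asf_afs_cO (sI sO : ℕ)
    (bI cI : Fin sI → ℝ)
    (AO : Matrix (Fin sO) (Fin sO) ℝ) (bO cO : Fin sO → ℝ)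
    (hbI1 : ∑ q, bI q = 1)
    (hbI2 : ∑ q, bI q * cI q = 1 / 2) :
    bO ⬝ᵥ (misAsf sI sO bI cO *ᵥ (misAfs sI sO cI AO bO *ᵥ cO))
      = (1 / 2) * (misV sO bO cO ⬝ᵥ (AO *ᵥ cO)) := by
  rw [dotProduct_misAsf_mulVec_misAfs_mulVec hbI1 hbI2, sum_tail_mul_sub_mul_eq, misV_dotProduct]
end

section
/- (Lemma 1, part 1.) Under the MIS/RMIS tableau setup, assume c^I_1 = 0. Then for every natural number q ≥ 0, (b^f)^⊺ ((c^f)^q) = (b^O)^⊺ ((c^O)^q), where the powers are taken componentwise. -/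
open Matrix BigOperators Finset

lemma sum_misBf_mul {sI : ℕ} (sO : ℕ) (hsI : 0 < sI) (bO : Fin sO → ℝ)
    (g : Fin sO × Fin sI → ℝ) :
    ∑ ip, misBf sI sO bO ip * g ip = ∑ i, bO i * g (i, ⟨0, hsI⟩) := by
  rw [Fintype.sum_prod_type]
  refine Finset.sum_congr rfl fun i _ => ?_
  rw [Finset.sum_eq_single ⟨0, hsI⟩]
  · simp [misBf]
  · intro p _ hp
    simp [misBf, Fin.val_ne_iff.mpr hp]
  · simp

lemma misCf_of_cI_eq_zero {sI sO : ℕ} {cI : Fin sI → ℝ} (cO : Fin sO → ℝ) {p : Fin sI}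
    (hp : cI p = 0) (i : Fin sO) : misCf sI sO cI cO (i, p) = cO i := by
  simp [misCf, hp]

/-- Lemma 1, part 1: If `c^I_1 = 0`, then for every `q ≥ 0`,
`(b^f)ᵀ((c^f)^q) = (b^O)ᵀ((c^O)^q)`. -/
theorem bf_cf_pow (sI sO : ℕ) (hsI : 1 ≤ sI) (cI : Fin sI → ℝ) (bO cO : Fin sO → ℝ)
    (hcI1 : cI ⟨0, by omega⟩ = 0) :
    ∀ q : ℕ, ∑ ip, misBf sI sO bO ip * (misCf sI sO cI cO ip) ^ q
      = ∑ i, bO i * (cO i) ^ q := by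
  intro q
  simp only [sum_misBf_mul sO hsI, misCf_of_cI_eq_zero cO hcI1]
end

section
/- Let c₂, c₃ ∈ ℝ with c₂ ∉ {0, 1/2, 1}, c₃ ∉ {0, 1}, c₃ ≠ c₂, and 6c₂c₃ − 4c₂ − 4c₃ + 3 ≠ 0. For the Butcher family table (A, b, c) with c = (0, c₂, c₃, 1) and entries given by Butcher's two-parameter family of 4-stage fourth-order explicit methods, the third-order MIS condition Σ_{i=2}^{4} (c_i − c_{i−1})(e_i + e_{i−1})^⊺ A c + (1 − c_4)(1/2 + e_4^⊺ A c) = 1/3 holds if and only if 3(c₂−1)(6c₂²c₃² − 4c₂²c₃ − 6c₂c₃³ + 8c₂c₃² − 11c₂c₃ + 6c₂ + 4c₃³ − 7c₃² + 7c₃ − 3) − 2(2c₂−1)(4c₂ + 4c₃ − 6c₂c₃ − 3) = 0. -/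
open Matrix

/-- The `A` matrix of Butcher's two-parameter family of 4-stage fourth-order explicit
Runge–Kutta methods with parameters `c₂, c₃`. -/
noncomputable def butcherA (c2 c3 : ℝ) : Matrix (Fin 4) (Fin 4) ℝ :=
  !![0, 0, 0, 0;
     c2, 0, 0, 0;
     c3 * (c3 + 4 * c2 ^ 2 - 3 * c2) / (2 * c2 * (2 * c2 - 1)),
       -(c3 * (c3 - c2)) / (2 * c2 * (2 * c2 - 1)), 0, 0;
     (-12 * c3 * c2 ^ 2 + 12 * c3 ^ 2 * c2 ^ 2 + 4 * c2 ^ 2 - 6 * c2 + 15 * c2 * c3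
         - 12 * c3 ^ 2 * c2 + 2 + 4 * c3 ^ 2 - 5 * c3)
       / (2 * c2 * c3 * (-4 * c3 + 6 * c3 * c2 + 3 - 4 * c2)),
       (c2 - 1) * (4 * c3 ^ 2 - 5 * c3 + 2 - c2)
       / (2 * c2 * (c3 - c2) * (-4 * c3 + 6 * c3 * c2 + 3 - 4 * c2)),
       -((2 * c2 - 1) * (c2 - 1) * (c3 - 1))
       / (c3 * (c3 - c2) * (-4 * c3 + 6 * c3 * c2 + 3 - 4 * c2)), 0]

/-- The weights `b` of Butcher's two-parameter family. -/
noncomputable def butcherB (c2 c3 : ℝ) : Fin 4 → ℝ :=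
  ![(6 * c3 * c2 - 2 * c3 - 2 * c2 + 1) / (12 * c3 * c2),
    -(2 * c3 - 1) / (12 * c2 * (c2 - 1) * (c3 - c2)),
    (2 * c2 - 1) / (12 * c3 * (c2 - c3 * c2 + c3 ^ 2 - c3)),
    (-4 * c3 + 6 * c3 * c2 + 3 - 4 * c2) / (12 * (c3 - 1) * (c2 - 1))]

/-- The abscissae `c` of Butcher's two-parameter family. -/
noncomputable def butcherC (c2 c3 : ℝ) : Fin 4 → ℝ := ![0, c2, c3, 1]

set_option maxHeartbeats 2000000 in
lemma butcher_key (c2 c3 : ℝ)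
    (h1 : c2 ≠ 0) (h2' : 2 * c2 - 1 ≠ 0)
    (h4 : c3 ≠ 0) (h6' : c3 - c2 ≠ 0)
    (h7' : -4 * c3 + 6 * c3 * c2 + 3 - 4 * c2 ≠ 0) :
    (butcherC c2 c3 1 - butcherC c2 c3 0) *
        ((butcherA c2 c3 *ᵥ butcherC c2 c3) 1 + (butcherA c2 c3 *ᵥ butcherC c2 c3) 0) +
      (butcherC c2 c3 2 - butcherC c2 c3 1) *
        ((butcherA c2 c3 *ᵥ butcherC c2 c3) 2 + (butcherA c2 c3 *ᵥ butcherC c2 c3) 1) +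
      (butcherC c2 c3 3 - butcherC c2 c3 2) *
        ((butcherA c2 c3 *ᵥ butcherC c2 c3) 3 + (butcherA c2 c3 *ᵥ butcherC c2 c3) 2) +
      (1 - butcherC c2 c3 3) * (1/2 + (butcherA c2 c3 *ᵥ butcherC c2 c3) 3) - 1/3 =
      (c3 - c2) * (3 * (c2 - 1) * (6 * c2 ^ 2 * c3 ^ 2 - 4 * c2 ^ 2 * c3 - 6 * c2 * c3 ^ 3
        + 8 * c2 * c3 ^ 2 - 11 * c2 * c3 + 6 * c2 + 4 * c3 ^ 3 - 7 * c3 ^ 2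
        + 7 * c3 - 3)
      - 2 * (2 * c2 - 1) * (4 * c2 + 4 * c3 - 6 * c2 * c3 - 3)) /
      ((-6 : ℝ) * (2 * c2 - 1) * (c3 - c2) * (-4 * c3 + 6 * c3 * c2 + 3 - 4 * c2)) := by
  have hd2 : (2 : ℝ) * (2 * c2 - 1) ≠ 0 := mul_ne_zero two_ne_zero h2'
  have hd3 : (2 : ℝ) * (c3 - c2) * (-4 * c3 + 6 * c3 * c2 + 3 - 4 * c2) ≠ 0 :=
    mul_ne_zero (mul_ne_zero two_ne_zero h6') h7'
  have hD : ((-6 : ℝ) * (2 * c2 - 1) * (c3 - c2) * (-4 * c3 + 6 * c3 * c2 + 3 - 4 * c2)) ≠ 0 :=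
    mul_ne_zero (mul_ne_zero (mul_ne_zero (by norm_num) h2') h6') h7'
  have e0 : (butcherA c2 c3 *ᵥ butcherC c2 c3) 0 = 0 := by
    simp [butcherA, butcherC, Matrix.mulVec, dotProduct, Fin.sum_univ_four]
  have e1 : (butcherA c2 c3 *ᵥ butcherC c2 c3) 1 = 0 := by
    simp [butcherA, butcherC, Matrix.mulVec, dotProduct, Fin.sum_univ_four]
  have e2 : (butcherA c2 c3 *ᵥ butcherC c2 c3) 2 =
      -(c3 * (c3 - c2)) / (2 * c2 * (2 * c2 - 1)) * c2 := by
    simp [butcherA, butcherC, Matrix.mulVec, dotProduct, Fin.sum_univ_four]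
  have r2 : -(c3 * (c3 - c2)) / (2 * c2 * (2 * c2 - 1)) * c2 =
      -(c3 * (c3 - c2)) / (2 * (2 * c2 - 1)) := by
    rw [div_mul_eq_mul_div, div_eq_div_iff (mul_ne_zero (mul_ne_zero two_ne_zero h1) h2') hd2]
    ring
  have e3 : (butcherA c2 c3 *ᵥ butcherC c2 c3) 3 =
      (c2 - 1) * (4 * c3 ^ 2 - 5 * c3 + 2 - c2)
        / (2 * c2 * (c3 - c2) * (-4 * c3 + 6 * c3 * c2 + 3 - 4 * c2)) * c2
      + -((2 * c2 - 1) * (c2 - 1) * (c3 - 1))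
        / (c3 * (c3 - c2) * (-4 * c3 + 6 * c3 * c2 + 3 - 4 * c2)) * c3 := by
    simp [butcherA, butcherC, Matrix.mulVec, dotProduct, Fin.sum_univ_four]
  have r3 : (c2 - 1) * (4 * c3 ^ 2 - 5 * c3 + 2 - c2)
        / (2 * c2 * (c3 - c2) * (-4 * c3 + 6 * c3 * c2 + 3 - 4 * c2)) * c2
      + -((2 * c2 - 1) * (c2 - 1) * (c3 - 1))
        / (c3 * (c3 - c2) * (-4 * c3 + 6 * c3 * c2 + 3 - 4 * c2)) * c3 =
      ((c2 - 1) * (4 * c3 ^ 2 - 5 * c3 + 2 - c2)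
        - 2 * (2 * c2 - 1) * (c2 - 1) * (c3 - 1))
        / (2 * (c3 - c2) * (-4 * c3 + 6 * c3 * c2 + 3 - 4 * c2)) := by
    have d1 : (2:ℝ) * c2 * (c3 - c2) * (-4 * c3 + 6 * c3 * c2 + 3 - 4 * c2) ≠ 0 :=
      mul_ne_zero (mul_ne_zero (mul_ne_zero two_ne_zero h1) h6') h7'
    have d2 : c3 * (c3 - c2) * (-4 * c3 + 6 * c3 * c2 + 3 - 4 * c2) ≠ 0 :=
      mul_ne_zero (mul_ne_zero h4 h6') h7'
    rw [div_mul_eq_mul_div, div_mul_eq_mul_div, div_add_div _ _ d1 d2,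
      div_eq_div_iff (mul_ne_zero d1 d2) hd3]
    ring
  rw [e0, e1, e2, r2, e3, r3]
  simp only [butcherC, Matrix.cons_val_zero, Matrix.cons_val_one, Matrix.head_cons,
    Matrix.cons_val_two, Matrix.tail_cons, Matrix.cons_val_three]
  rw [sub_eq_iff_eq_add, div_add' _ _ _ hD, eq_div_iff hD]
  have hq2 : -(c3 * (c3 - c2)) / (2 * (2 * c2 - 1)) * (2 * (2 * c2 - 1)) =
      -(c3 * (c3 - c2)) := div_mul_cancel₀ _ hd2
  have hq3 : ((c2 - 1) * (4 * c3 ^ 2 - 5 * c3 + 2 - c2)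
        - 2 * (2 * c2 - 1) * (c2 - 1) * (c3 - 1))
        / (2 * (c3 - c2) * (-4 * c3 + 6 * c3 * c2 + 3 - 4 * c2))
        * (2 * (c3 - c2) * (-4 * c3 + 6 * c3 * c2 + 3 - 4 * c2)) =
      ((c2 - 1) * (4 * c3 ^ 2 - 5 * c3 + 2 - c2)
        - 2 * (2 * c2 - 1) * (c2 - 1) * (c3 - 1)) := div_mul_cancel₀ _ hd3
  linear_combination ((1 - c2) * (-3) * (c3 - c2) * (-4 * c3 + 6 * c3 * c2 + 3 - 4 * c2)) * hq2
    + ((1 - c3) * (-3) * (2 * c2 - 1)) * hq3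

/-- For Butcher's family, the third-order MIS condition holds iff the
polynomial equation \eqref{eq:RK4stageSolRFSMR} holds. -/
theorem butcher_mis_condition_iff (c2 c3 : ℝ)
    (h1 : c2 ≠ 0) (h2 : c2 ≠ 1/2) (h3 : c2 ≠ 1)
    (h4 : c3 ≠ 0) (h5 : c3 ≠ 1) (h6 : c3 ≠ c2)
    (h7 : 6 * c2 * c3 - 4 * c2 - 4 * c3 + 3 ≠ 0) :
    let A := butcherA c2 c3
    let c := butcherC c2 c3
    ((c 1 - c 0) * ((A *ᵥ c) 1 + (A *ᵥ c) 0) +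
     (c 2 - c 1) * ((A *ᵥ c) 2 + (A *ᵥ c) 1) +
     (c 3 - c 2) * ((A *ᵥ c) 3 + (A *ᵥ c) 2) +
     (1 - c 3) * (1/2 + (A *ᵥ c) 3) = 1/3)
    ↔ 3 * (c2 - 1) * (6 * c2 ^ 2 * c3 ^ 2 - 4 * c2 ^ 2 * c3 - 6 * c2 * c3 ^ 3
        + 8 * c2 * c3 ^ 2 - 11 * c2 * c3 + 6 * c2 + 4 * c3 ^ 3 - 7 * c3 ^ 2
        + 7 * c3 - 3)
      - 2 * (2 * c2 - 1) * (4 * c2 + 4 * c3 - 6 * c2 * c3 - 3) = 0 := by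
  intro A c
  have h2' : 2 * c2 - 1 ≠ 0 := fun h => h2 (by linarith)
  have h6' : c3 - c2 ≠ 0 := sub_ne_zero.mpr h6
  have h7' : -4 * c3 + 6 * c3 * c2 + 3 - 4 * c2 ≠ 0 := fun h => h7 (by linarith)
  have hD : ((-6 : ℝ) * (2 * c2 - 1) * (c3 - c2) * (-4 * c3 + 6 * c3 * c2 + 3 - 4 * c2)) ≠ 0 :=
    mul_ne_zero (mul_ne_zero (mul_ne_zero (by norm_num) h2') h6') h7'
  have hA : A = butcherA c2 c3 := rfl
  have hc : c = butcherC c2 c3 := rfl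
  rw [← sub_eq_zero, hA, hc, butcher_key c2 c3 h1 h2' h4 h6' h7', div_eq_zero_iff,
    or_iff_left hD, mul_eq_zero, or_iff_right h6']
end
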